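/- arXiv:1303.7416 — 4 statements merged into one kernel-verified Lean document; each statement's English description precedes it below -/
import Mathlib

section
/- Abstract Friedrichs–Poincaré inequality: if γ : V → H is a nonzero continuous, linear, compact operator between Hilbert spaces and λ₁ is the smallest eigenvalue of the problem (u,v)_V = λ (γu, γv)_H, then ‖γv‖_H ≤ λ₁^{-1/2} ‖v‖_V for all v ∈ V, and the constant C_γ = λ₁^{-1/2} is optimal, i.e., equality holds for the eigenvector u₁ corresponding to λ₁. -/
/-! The Gram operator `γ† ∘ γ` is compact and positive with norm `‖γ‖²`, so `‖γ‖²` is one of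
its eigenvalues. An eigenvector `u` for it solves `(u, v)_V = ‖γ‖⁻² (γu, γv)_H`, hence minimality
of `λ₁` gives `λ₁ ≤ ‖γ‖⁻²`, i.e. `‖γ‖ ≤ λ₁^{-1/2}`. Testing the equation of `u₁` against `u₁`
itself gives `‖u₁‖² = λ₁ ‖γ u₁‖²`, the equality case. -/

open RealInnerProductSpace

namespace ContinuousLinearMap

open Module.End

variable {𝕜 E F : Type*} [RCLike 𝕜] [NormedAddCommGroup E] [InnerProductSpace 𝕜 E]
  [CompleteSpace E] [NormedAddCommGroup F] [InnerProductSpace 𝕜 F] [CompleteSpace F]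

/-- For `T ≥ 0`, `‖T‖` is the supremum of the Rayleigh quotient, which would stay bounded away
from `‖T‖` if `‖T‖` were in the resolvent set; compactness turns this spectral value into an
eigenvalue. -/
theorem IsPositive.hasEigenvalue_norm {T : E →L[𝕜] E} (hT : T.IsPositive)
    (hTc : IsCompactOperator T) (hT0 : T ≠ 0) :
    HasEigenvalue (T : Module.End 𝕜 E) (‖T‖ : 𝕜) := by
  have : Nontrivial E := by
    by_contra h
    rw [not_nontrivial_iff_subsingleton] at h
    exact hT0 (Subsingleton.elim _ _)
  rw [hTc.hasEigenvalue_iff_mem_spectrum (by simpa using hT0), ← RCLike.algebraMap_eq_ofReal]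
  by_contra hspec
  obtain ⟨ε, hε, hle⟩ := T.rayleighQuotient_le_of_norm_mem_resolventSet
    (Set.notMem_compl_iff.mp hspec)
  have hsup : ⨆ x, |T.rayleighQuotient x| ≤ ‖T‖ - ε := ciSup_le fun x => by
    have hnonneg : 0 ≤ T.rayleighQuotient x :=
      div_nonneg (hT.re_inner_nonneg_left x) (sq_nonneg _)
    exact (abs_of_nonneg hnonneg).trans_le (hle x)
  linarith [T.norm_eq_iSup_rayleighQuotient hT.isSymmetric]

theorem hasEigenvalue_adjoint_comp_self_norm_sq {γ : E →L[𝕜] F} (hγ : IsCompactOperator γ)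
    (hγ0 : γ ≠ 0) :
    HasEigenvalue ((adjoint γ ∘L γ : E →L[𝕜] E) : Module.End 𝕜 E) ((‖γ‖ ^ 2 : ℝ) : 𝕜) := by
  have h := (isPositive_adjoint_comp_self γ).hasEigenvalue_norm
    (hγ.clm_comp (adjoint γ)) (by simpa using hγ0)
  rwa [norm_adjoint_comp_self, ← sq] at h

end ContinuousLinearMap

section EigenvalueProblem

variable {V H : Type*} [NormedAddCommGroup V] [InnerProductSpace ℝ V]
  [NormedAddCommGroup H] [InnerProductSpace ℝ H]

theorem norm_eq_sqrt_mul_norm_apply_of_inner_eq (γ : V →ₗ[ℝ] H) {lam : ℝ} {u : V}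
    (h : ∀ v : V, ⟪u, v⟫ = lam * ⟪γ u, γ v⟫) : ‖u‖ = √lam * ‖γ u‖ := by
  have hsq : ‖u‖ ^ 2 = lam * ‖γ u‖ ^ 2 := by
    simpa only [real_inner_self_eq_norm_sq] using h u
  rw [← Real.sqrt_sq (norm_nonneg u), hsq, Real.sqrt_mul' _ (sq_nonneg _),
    Real.sqrt_sq (norm_nonneg _)]

theorem exists_inner_eq_inv_norm_sq_mul_inner_apply [CompleteSpace V] [CompleteSpace H]
    {γ : V →L[ℝ] H} (hγ : IsCompactOperator γ) (hγ0 : γ ≠ 0) :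
    ∃ u ≠ 0, ∀ v : V, ⟪u, v⟫ = (‖γ‖ ^ 2)⁻¹ * ⟪γ u, γ v⟫ := by
  obtain ⟨u, hu⟩ :=
    (ContinuousLinearMap.hasEigenvalue_adjoint_comp_self_norm_sq hγ hγ0).exists_hasEigenvector
  refine ⟨u, hu.2, fun v => ?_⟩
  have hγu : ContinuousLinearMap.adjoint γ (γ u) = ‖γ‖ ^ 2 • u := hu.apply_eq_smul
  have hγ2 : ‖γ‖ ^ 2 ≠ 0 := by positivity
  rw [← ContinuousLinearMap.adjoint_inner_left, hγu, real_inner_smul_left,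
    inv_mul_cancel_left₀ hγ2]

end EigenvalueProblem

theorem abstract_friedrichs_poincare_inequality_general
    {V H : Type*} [NormedAddCommGroup V] [InnerProductSpace ℝ V] [CompleteSpace V]
    [NormedAddCommGroup H] [InnerProductSpace ℝ H] [CompleteSpace H]
    (γ : V →L[ℝ] H) (hγ : IsCompactOperator γ)
    (lam₁ : ℝ) (u₁ : V) (hu₁ : u₁ ≠ 0)
    (heig : ∀ v : V, ⟪u₁, v⟫ = lam₁ * ⟪γ u₁, γ v⟫)
    (hmin : ∀ (lam : ℝ) (u : V), u ≠ 0 → (∀ v : V, ⟪u, v⟫ = lam * ⟪γ u, γ v⟫) →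
      lam₁ ≤ lam) :
    (∀ v : V, ‖γ v‖ ≤ (Real.sqrt lam₁)⁻¹ * ‖v‖) ∧
      ‖γ u₁‖ = (Real.sqrt lam₁)⁻¹ * ‖u₁‖ := by
  have hu₁_norm : ‖u₁‖ = √lam₁ * ‖γ u₁‖ :=
    norm_eq_sqrt_mul_norm_apply_of_inner_eq (γ : V →ₗ[ℝ] H) heig
  have hu₁_pos : 0 < √lam₁ * ‖γ u₁‖ := hu₁_norm ▸ norm_pos_iff.mpr hu₁
  have hsqrt : 0 < √lam₁ := pos_of_mul_pos_left hu₁_pos (norm_nonneg _)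
  have hγ0 : γ ≠ 0 := by
    rintro rfl
    simp at hu₁_pos
  obtain ⟨u, hu, hu_eig⟩ := exists_inner_eq_inv_norm_sq_mul_inner_apply hγ hγ0
  have hγ_norm : ‖γ‖ ≤ (√lam₁)⁻¹ := by
    have hle : ‖γ‖ ^ 2 ≤ lam₁⁻¹ :=
      (le_inv_comm₀ (Real.sqrt_pos.mp hsqrt) (by positivity)).mp (hmin _ u hu hu_eig)
    rw [← Real.sqrt_inv]
    exact Real.le_sqrt_of_sq_le hle
  refine ⟨fun v => (γ.le_opNorm v).trans (by gcongr), ?_⟩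
  rw [hu₁_norm, inv_mul_cancel_left₀ hsqrt.ne']

/-- Abstract inequality of Friedrichs–Poincaré type: if `λ₁` is the smallest eigenvalue
of `(u,v)_V = λ (γu,γv)_H` then `‖γ v‖_H ≤ λ₁^{-1/2} ‖v‖_V` for all `v`, and equality
holds for the eigenvector `u₁` corresponding to `λ₁`, so the constant is optimal. -/
theorem abstract_friedrichs_poincare_inequality
    {V H : Type*} [NormedAddCommGroup V] [InnerProductSpace ℝ V] [CompleteSpace V]
    [NormedAddCommGroup H] [InnerProductSpace ℝ H] [CompleteSpace H]
    (γ : V →L[ℝ] H) (hγ : IsCompactOperator γ) (hγ0 : γ ≠ 0)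
    (lam₁ : ℝ) (u₁ : V) (hu₁ : u₁ ≠ 0)
    (heig : ∀ v : V, ⟪u₁, v⟫ = lam₁ * ⟪γ u₁, γ v⟫)
    (hmin : ∀ (lam : ℝ) (u : V), u ≠ 0 → (∀ v : V, ⟪u, v⟫ = lam * ⟪γ u, γ v⟫) →
      lam₁ ≤ lam) :
    (∀ v : V, ‖γ v‖ ≤ (Real.sqrt lam₁)⁻¹ * ‖v‖) ∧
      ‖γ u₁‖ = (Real.sqrt lam₁)⁻¹ * ‖u₁‖ :=
  abstract_friedrichs_poincare_inequality_general γ hγ lam₁ u₁ hu₁ heig hmin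
end

section
/- A priori–a posteriori inequality: let u_* ∈ V, λ_* ∈ ℝ be arbitrary, and let w ∈ V satisfy (w,v)_V = (u_*,v)_V − λ_* (γu_*, γv)_H for all v ∈ V. If γu_* ≠ 0, then min_i |(λ_i − λ_*)/λ_i| ≤ ‖γw‖_H / ‖γu_*‖_H, where λ_i range over the eigenvalues of the problem (u,v)_V = λ (γu, γv)_H. -/
/-!
Testing the residual equation against the eigenvector `uᵢ` gives
`(γuᵢ, γw) = ((λᵢ - λ_*)/λᵢ) (γuᵢ, γu_*)`. The `γuᵢ` are orthonormal and `γu_*` lies in the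
closure of their span, because `γ` kills the `ker (Sγ)` part of the decomposition
(`(Sγk, k) = ‖γk‖²`). Parseval's identity for `γu_*` and Bessel's inequality for `γw` then give
`(inf_i |(λᵢ - λ_*)/λᵢ|)² ‖γu_*‖² ≤ ‖γw‖²`.
-/

open RealInnerProductSpace Submodule

theorem ContinuousLinearMap.apply_mem_topologicalClosure_span_range_comp {𝕜 E F ι : Type*}
    [NontriviallyNormedField 𝕜] [NormedAddCommGroup E] [NormedSpace 𝕜 E] [NormedAddCommGroup F]
    [NormedSpace 𝕜 F] (T : E →L[𝕜] F) {v : ι → E} {x : E}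
    (hx : x ∈ (span 𝕜 (Set.range v)).topologicalClosure) :
    T x ∈ (span 𝕜 (Set.range (T ∘ v))).topologicalClosure := by
  have h := topologicalClosure_map T _ ⟨x, hx, rfl⟩
  rwa [map_span, ← Set.range_comp] at h

section

variable {𝕜 E ι : Type*} [RCLike 𝕜] [NormedAddCommGroup E] [InnerProductSpace 𝕜 E]

theorem HilbertBasis.hasSum_norm_inner_sq (b : HilbertBasis ι 𝕜 E) (x : E) :
    HasSum (fun i => ‖inner 𝕜 (b i) x‖ ^ 2) (‖x‖ ^ 2) := by
  have h := lp.hasSum_norm (p := 2) (by norm_num) (b.repr x)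
  simpa [b.repr_apply_apply] using h

theorem apply_eq_zero_of_adjoint_apply_eq_zero {F : Type*} [NormedAddCommGroup F]
    [InnerProductSpace 𝕜 F] {T : E →L[𝕜] F} {S : F → E}
    (hS : ∀ f v, inner 𝕜 (S f) v = inner 𝕜 f (T v)) {v : E} (hv : S (T v) = 0) : T v = 0 := by
  rw [← inner_self_eq_zero (𝕜 := 𝕜), ← hS, hv, inner_zero_left]

variable [CompleteSpace E]

theorem Orthonormal.hasSum_norm_inner_sq_of_mem_closure {v : ι → E} (hv : Orthonormal 𝕜 v)
    {x : E} (hx : x ∈ (span 𝕜 (Set.range v)).topologicalClosure) :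
    HasSum (fun i => ‖inner 𝕜 (v i) x‖ ^ 2) (‖x‖ ^ 2) := by
  let K := (span 𝕜 (Set.range v)).topologicalClosure
  have : CompleteSpace K := (span 𝕜 (Set.range v)).isClosed_topologicalClosure.completeSpace_coe
  let vK : ι → K := fun i => ⟨v i, le_topologicalClosure _ (subset_span ⟨i, rfl⟩)⟩
  have hvK : Orthonormal 𝕜 vK := hv
  have hsp : ⊤ ≤ (span 𝕜 (Set.range vK)).topologicalClosure := by
    rw [top_le_iff, ← dense_iff_topologicalClosure_eq_top]
    have himage : Subtype.val '' (span 𝕜 (Set.range vK) : Set K) = span 𝕜 (Set.range v) := by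
      rw [← K.coe_subtype, ← map_coe, map_span, ← Set.range_comp]
      rfl
    intro y
    rw [closure_subtype, himage]
    exact y.2
  have h := (HilbertBasis.mk hvK hsp).hasSum_norm_inner_sq ⟨x, hx⟩
  simpa [vK] using h

theorem Orthonormal.iInf_norm_mul_norm_le_norm {v : ι → E} (hv : Orthonormal 𝕜 v) {x y : E}
    (hx : x ∈ (span 𝕜 (Set.range v)).topologicalClosure) (r : ι → 𝕜)
    (hy : ∀ i, inner 𝕜 (v i) y = r i * inner 𝕜 (v i) x) :
    (⨅ i, ‖r i‖) * ‖x‖ ≤ ‖y‖ := by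
  set δ := ⨅ i, ‖r i‖
  have hδ : 0 ≤ δ := Real.iInf_nonneg fun i => norm_nonneg _
  have hterm : ∀ i, δ ^ 2 * ‖inner 𝕜 (v i) x‖ ^ 2 ≤ ‖inner 𝕜 (v i) y‖ ^ 2 := fun i => by
    rw [hy, norm_mul, mul_pow]
    gcongr
    exact ciInf_le ⟨0, Set.forall_mem_range.2 fun i => norm_nonneg _⟩ i
  have hsq : (δ * ‖x‖) ^ 2 ≤ ‖y‖ ^ 2 := calc
    (δ * ‖x‖) ^ 2 = ∑' i, δ ^ 2 * ‖inner 𝕜 (v i) x‖ ^ 2 := by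
      rw [mul_pow, ((hv.hasSum_norm_inner_sq_of_mem_closure hx).mul_left _).tsum_eq]
    _ ≤ ∑' i, ‖inner 𝕜 (v i) y‖ ^ 2 :=
      ((hv.hasSum_norm_inner_sq_of_mem_closure hx).mul_left _).summable.tsum_le_tsum hterm
        (hv.inner_products_summable y)
    _ ≤ ‖y‖ ^ 2 := hv.tsum_inner_products_le y
  exact (pow_le_pow_iff_left₀ (by positivity) (norm_nonneg _) two_ne_zero).1 hsq

end

section
variable {V H : Type*} [NormedAddCommGroup V] [InnerProductSpace ℝ V]
  [NormedAddCommGroup H] [InnerProductSpace ℝ H] (γ : V →L[ℝ] H)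

theorem ne_zero_of_inner_eq_mul_inner {u : V} {μ : ℝ} (heig : ∀ v, ⟪u, v⟫ = μ * ⟪γ u, γ v⟫)
    (hu : γ u ≠ 0) : μ ≠ 0 := by
  rintro rfl
  have hu0 : u = 0 := by simpa using heig u
  exact hu (by rw [hu0, map_zero])

theorem inner_apply_residual {u ustar w : V} {μ lamstar : ℝ}
    (heig : ∀ v, ⟪u, v⟫ = μ * ⟪γ u, γ v⟫) (hμ : μ ≠ 0)
    (hw : ∀ v, ⟪w, v⟫ = ⟪ustar, v⟫ - lamstar * ⟪γ ustar, γ v⟫) :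
    ⟪γ u, γ w⟫ = (μ - lamstar) / μ * ⟪γ u, γ ustar⟫ := by
  have h := hw u
  rw [real_inner_comm u w, heig, real_inner_comm u ustar, heig, real_inner_comm (γ u)] at h
  field_simp
  linarith

end

theorem apriori_aposteriori_inequality_general
    {V H : Type*} [NormedAddCommGroup V] [InnerProductSpace ℝ V]
    [NormedAddCommGroup H] [InnerProductSpace ℝ H] [CompleteSpace H]
    (γ : V →L[ℝ] H)
    (S : H →L[ℝ] V)
    (hS : ∀ (f : H) (v : V), ⟪S f, v⟫ = ⟪f, γ v⟫)
    (lam : ℕ → ℝ) (ui : ℕ → V)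
    (heig : ∀ i, ∀ v : V, ⟪ui i, v⟫ = lam i * ⟪γ (ui i), γ v⟫)
    (hortho : ∀ i j, ⟪γ (ui i), γ (ui j)⟫ = if i = j then (1 : ℝ) else 0)
    (hdecomp : ∀ u : V, ∃ m ∈ (Submodule.span ℝ (Set.range ui)).topologicalClosure,
      ∃ k : V, S (γ k) = 0 ∧ u = m + k)
    (ustar : V) (lamstar : ℝ) (hustar : γ ustar ≠ 0)
    (w : V)
    (hw : ∀ v : V, ⟪w, v⟫ = ⟪ustar, v⟫ - lamstar * ⟪γ ustar, γ v⟫) :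
    (⨅ i : ℕ, |(lam i - lamstar) / lam i|) ≤ ‖γ w‖ / ‖γ ustar‖ := by
  have hγui : Orthonormal ℝ (γ ∘ ui) := orthonormal_iff_ite.2 hortho
  have hlam : ∀ i, lam i ≠ 0 := fun i =>
    ne_zero_of_inner_eq_mul_inner γ (heig i) (hγui.ne_zero i)
  have hustar_mem : γ ustar ∈ (span ℝ (Set.range (γ ∘ ui))).topologicalClosure := by
    obtain ⟨m, hm, k, hk, rfl⟩ := hdecomp ustar
    rw [map_add, apply_eq_zero_of_adjoint_apply_eq_zero hS hk, add_zero]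
    exact γ.apply_mem_topologicalClosure_span_range_comp hm
  have h := hγui.iInf_norm_mul_norm_le_norm hustar_mem _ fun i =>
    inner_apply_residual γ (heig i) (hlam i) hw
  rw [le_div_iff₀ (norm_pos_iff.2 hustar)]
  simpa only [Real.norm_eq_abs] using h

/-- A priori–a posteriori inequality: if `w` is the residual of an arbitrary pair
`(u_*, λ_*)`, i.e. `(w,v)_V = (u_*,v)_V − λ_* (γu_*, γv)_H` for all `v`, and
`γ u_* ≠ 0`, then `inf_i |(λᵢ − λ_*)/λᵢ| ≤ ‖γw‖_H / ‖γu_*‖_H`, where the `λᵢ` are the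
eigenvalues of `(u,v)_V = λ (γu, γv)_H` with eigenvectors `uᵢ` normalized by
`(γuᵢ, γuⱼ)_H = δᵢⱼ`, spanning `V` together with `ker (Sγ)`. -/
theorem apriori_aposteriori_inequality
    {V H : Type*} [NormedAddCommGroup V] [InnerProductSpace ℝ V] [CompleteSpace V]
    [NormedAddCommGroup H] [InnerProductSpace ℝ H] [CompleteSpace H]
    (γ : V →L[ℝ] H) (hγ : IsCompactOperator γ)
    (S : H →L[ℝ] V)
    (hS : ∀ (f : H) (v : V), ⟪S f, v⟫ = ⟪f, γ v⟫)
    (lam : ℕ → ℝ) (ui : ℕ → V)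
    (hui : ∀ i, ui i ≠ 0)
    (heig : ∀ i, ∀ v : V, ⟪ui i, v⟫ = lam i * ⟪γ (ui i), γ v⟫)
    (hortho : ∀ i j, ⟪γ (ui i), γ (ui j)⟫ = if i = j then (1 : ℝ) else 0)
    (hdecomp : ∀ u : V, ∃ m ∈ (Submodule.span ℝ (Set.range ui)).topologicalClosure,
      ∃ k : V, S (γ k) = 0 ∧ u = m + k)
    (ustar : V) (lamstar : ℝ) (hustar : γ ustar ≠ 0)
    (w : V)
    (hw : ∀ v : V, ⟪w, v⟫ = ⟪ustar, v⟫ - lamstar * ⟪γ ustar, γ v⟫) :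
    (⨅ i : ℕ, |(lam i - lamstar) / lam i|) ≤ ‖γ w‖ / ‖γ ustar‖ :=
  apriori_aposteriori_inequality_general γ S hS lam ui heig hortho hdecomp ustar lamstar hustar w hw
end

section
/- Abstract complementarity lower bound: with w the residual of (u_*, λ_*), suppose λ₁ is relatively closest to λ_*, i.e., |(λ₁−λ_*)/λ₁| ≤ |(λ_i−λ_*)/λ_i| for all i; suppose A ≥ 0, B ≥ 0 satisfy B < λ_* ‖γu_*‖_H and ‖w‖_V ≤ A + C_γ B, where C_γ = λ₁^{-1/2}. Then X₂² ≤ λ₁ and C_γ ≤ 1/X₂, where X₂ = (−α + √(α² + 4(λ_* − β)))/2 with α = A/‖γu_*‖_H and β = B/‖γu_*‖_H. -/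
/-!
Expand `γ u_*` in the `H`-orthonormal eigenbasis `γ uᵢ`. Testing the residual equation with `uᵢ`
shows that the coefficients of `γ w` are those of `γ u_*` multiplied by `(λᵢ − λ_*)/λᵢ`, so by
Parseval for `γ u_*` and Bessel for `γ w` the closest-eigenvalue hypothesis gives
`|(λ₁ − λ_*)/λ₁| ‖γ u_*‖ ≤ ‖γ w‖ ≤ C_γ ‖w‖ ≤ C_γ (A + C_γ B)`.
With `s = √λ₁ = C_γ⁻¹` this says `λ_* − β ≤ s² + α s`, i.e. `s` lies beyond the positive root `X₂`
of `X² + α X − (λ_* − β)`.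
-/

open RealInnerProductSpace Submodule

theorem ContinuousLinearMap.map_mem_closure_span_range {R M M₂ ι : Type*} [Semiring R]
    [AddCommMonoid M] [TopologicalSpace M] [Module R M] [ContinuousAdd M]
    [ContinuousConstSMul R M] [AddCommMonoid M₂] [TopologicalSpace M₂] [Module R M₂]
    [ContinuousAdd M₂] [ContinuousConstSMul R M₂]
    (f : M →L[R] M₂) {u : ι → M} {x : M} (hx : x ∈ (span R (Set.range u)).topologicalClosure) :
    f x ∈ (span R (Set.range (f ∘ u))).topologicalClosure := by
  refine map_mem_closure f.continuous hx fun y hy => ?_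
  rw [Set.range_comp]
  exact apply_mem_span_image_of_mem_span (f : M →ₗ[R] M₂) hy

section Orthonormal

variable {E ι : Type*} [NormedAddCommGroup E] [InnerProductSpace ℝ E] [CompleteSpace E]
  {e : ι → E}

theorem Orthonormal.tsum_inner_sq_eq_norm_sq_of_mem_closure (he : Orthonormal ℝ e) {x : E}
    (hx : x ∈ (span ℝ (Set.range e)).topologicalClosure) :
    ∑' i, ⟪e i, x⟫ ^ 2 = ‖x‖ ^ 2 := by
  set K := (span ℝ (Set.range e)).topologicalClosure
  have heK : ∀ i, e i ∈ K := fun i => le_topologicalClosure _ (subset_span ⟨i, rfl⟩)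
  have hdense : ⊤ ≤ (span ℝ (Set.range (Set.codRestrict e K heK))).topologicalClosure := by
    rintro ⟨y, hy⟩ -
    have himage : K.subtype '' (span ℝ (Set.range (Set.codRestrict e K heK)) : Set K)
        = span ℝ (Set.range e) := by
      rw [← Submodule.map_coe, Submodule.map_span, ← Set.range_comp]
      rfl
    refine closure_subtype.mpr ?_
    change y ∈ closure (K.subtype '' (span ℝ (Set.range (Set.codRestrict e K heK)) : Set K))
    rw [himage]
    exact hy
  have h := (HilbertBasis.mk (he.codRestrict K heK) hdense).tsum_inner_mul_inner ⟨x, hx⟩ ⟨x, hx⟩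
  simp only [HilbertBasis.coe_mk, Submodule.coe_inner, Set.val_codRestrict_apply] at h
  simpa only [real_inner_comm x, ← sq, real_inner_self_eq_norm_sq] using h

theorem Orthonormal.mul_norm_le_norm_of_inner_eq_mul (he : Orthonormal ℝ e) {x y : E}
    (hx : x ∈ (span ℝ (Set.range e)).topologicalClosure) {t : ι → ℝ}
    (hy : ∀ i, ⟪e i, y⟫ = t i * ⟪e i, x⟫) {c : ℝ} (hc : 0 ≤ c) (ht : ∀ i, c ≤ |t i|) :
    c * ‖x‖ ≤ ‖y‖ := by
  have hsum_x : Summable fun i => ⟪e i, x⟫ ^ 2 := by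
    simpa only [Real.norm_eq_abs, sq_abs] using he.inner_products_summable x
  have hsum_y : Summable fun i => t i ^ 2 * ⟪e i, x⟫ ^ 2 := by
    simpa only [Real.norm_eq_abs, sq_abs, hy, mul_pow] using he.inner_products_summable y
  have hbessel : ∑' i, t i ^ 2 * ⟪e i, x⟫ ^ 2 ≤ ‖y‖ ^ 2 := by
    simpa only [Real.norm_eq_abs, sq_abs, hy, mul_pow] using he.tsum_inner_products_le y
  have hsq : c ^ 2 * ‖x‖ ^ 2 ≤ ‖y‖ ^ 2 := by
    rw [← he.tsum_inner_sq_eq_norm_sq_of_mem_closure hx, ← tsum_mul_left]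
    refine (hsum_x.mul_left _).tsum_le_tsum (fun i => ?_) hsum_y |>.trans hbessel
    have hct : c ^ 2 ≤ t i ^ 2 := sq_abs (t i) ▸ pow_le_pow_left₀ hc (ht i) 2
    exact mul_le_mul_of_nonneg_right hct (sq_nonneg _)
  rw [← mul_pow] at hsq
  exact (pow_le_pow_iff_left₀ (by positivity) (norm_nonneg y) two_ne_zero).mp hsq

end Orthonormal

section Eigenpair

variable {V H : Type*} [NormedAddCommGroup V] [InnerProductSpace ℝ V]
  [NormedAddCommGroup H] [InnerProductSpace ℝ H] (γ : V →L[ℝ] H)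

theorem pos_of_inner_eq_mul_inner_map {u : V} {μ : ℝ}
    (hu : ∀ v, ⟪u, v⟫ = μ * ⟪γ u, γ v⟫) (hγu : γ u ≠ 0) : 0 < μ := by
  have hu0 : u ≠ 0 := fun h => hγu (by rw [h, map_zero])
  have h := hu u
  rw [real_inner_self_eq_norm_sq, real_inner_self_eq_norm_sq] at h
  have hpos : 0 < ‖u‖ ^ 2 := by positivity
  have hγpos : 0 < ‖γ u‖ ^ 2 := by positivity
  nlinarith

theorem inner_map_residual_eq_div_mul {u ustar w : V} {μ lamstar : ℝ} (hμ : μ ≠ 0)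
    (hu : ∀ v, ⟪u, v⟫ = μ * ⟪γ u, γ v⟫)
    (hw : ∀ v, ⟪w, v⟫ = ⟪ustar, v⟫ - lamstar * ⟪γ ustar, γ v⟫) :
    ⟪γ u, γ w⟫ = (μ - lamstar) / μ * ⟪γ u, γ ustar⟫ := by
  have h : μ * ⟪γ u, γ w⟫ = (μ - lamstar) * ⟪γ u, γ ustar⟫ := by
    rw [← hu, real_inner_comm, hw, real_inner_comm, hu, real_inner_comm (γ ustar)]
    ring
  rw [div_mul_eq_mul_div, eq_div_iff hμ, mul_comm, h]

theorem map_eq_zero_of_adjoint_map_eq_zero {S : H →L[ℝ] V} (hS : ∀ f v, ⟪S f, v⟫ = ⟪f, γ v⟫)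
    {k : V} (hk : S (γ k) = 0) : γ k = 0 := by
  rw [← inner_self_eq_zero (𝕜 := ℝ), ← hS, hk, inner_zero_left]

end Eigenpair

theorem quadratic_pos_root_le {α c s : ℝ} (hs : 0 < s) (hc : 0 < c) (h : c ≤ s ^ 2 + α * s) :
    0 < (-α + √(α ^ 2 + 4 * c)) / 2 ∧ (-α + √(α ^ 2 + 4 * c)) / 2 ≤ s := by
  have hα : α < √(α ^ 2 + 4 * c) :=
    (le_abs_self α).trans_lt
      (Real.sqrt_sq_eq_abs α ▸ Real.sqrt_lt_sqrt (sq_nonneg α) (by linarith))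
  have hsα : 0 ≤ 2 * s + α := by nlinarith
  have hroot : √(α ^ 2 + 4 * c) ≤ 2 * s + α := Real.sqrt_le_iff.mpr ⟨hsα, by nlinarith⟩
  constructor <;> linarith

theorem sub_div_le_sq_add_mul_of_abs_mul_le {lam s g A B : ℝ} (hs : 0 < s) (hg : 0 < g)
    (h : |(s ^ 2 - lam) / s ^ 2| * g ≤ s⁻¹ * (A + s⁻¹ * B)) :
    lam - B / g ≤ s ^ 2 + A / g * s := by
  have h' : (lam - s ^ 2) / s ^ 2 * g ≤ s⁻¹ * (A + s⁻¹ * B) := by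
    refine le_trans ?_ h
    rw [← neg_sub, neg_div]
    exact mul_le_mul_of_nonneg_right (neg_le_abs _) hg.le
  field_simp at h' ⊢
  nlinarith

theorem abstract_complementarity_estimate_general
    {V H : Type*} [NormedAddCommGroup V] [InnerProductSpace ℝ V]
    [NormedAddCommGroup H] [InnerProductSpace ℝ H] [CompleteSpace H]
    (γ : V →L[ℝ] H)
    (S : H →L[ℝ] V)
    (hS : ∀ (f : H) (v : V), ⟪S f, v⟫ = ⟪f, γ v⟫)
    (lam : ℕ → ℝ) (ui : ℕ → V)
    (heig : ∀ i, ∀ v : V, ⟪ui i, v⟫ = lam i * ⟪γ (ui i), γ v⟫)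
    (hortho : ∀ i j, ⟪γ (ui i), γ (ui j)⟫ = if i = j then (1 : ℝ) else 0)
    (hdecomp : ∀ u : V, ∃ m ∈ (Submodule.span ℝ (Set.range ui)).topologicalClosure,
      ∃ k : V, S (γ k) = 0 ∧ u = m + k)
    (ustar : V) (lamstar : ℝ) (hustar : γ ustar ≠ 0)
    (w : V)
    (hw : ∀ v : V, ⟪w, v⟫ = ⟪ustar, v⟫ - lamstar * ⟪γ ustar, γ v⟫)
    (hclosest : ∀ i, |(lam 0 - lamstar) / lam 0| ≤ |(lam i - lamstar) / lam i|)
    (Cγ : ℝ) (hCγ : Cγ = (Real.sqrt (lam 0))⁻¹)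
    (hCopt : ∀ v : V, ‖γ v‖ ≤ Cγ * ‖v‖)
    (A B : ℝ)
    (hBsmall : B < lamstar * ‖γ ustar‖)
    (hwbound : ‖w‖ ≤ A + Cγ * B) :
    ((-(A / ‖γ ustar‖) +
        Real.sqrt ((A / ‖γ ustar‖) ^ 2 + 4 * (lamstar - B / ‖γ ustar‖))) / 2) ^ 2
      ≤ lam 0 ∧
    Cγ ≤ 1 / ((-(A / ‖γ ustar‖) +
        Real.sqrt ((A / ‖γ ustar‖) ^ 2 + 4 * (lamstar - B / ‖γ ustar‖))) / 2) := by
  have hg : 0 < ‖γ ustar‖ := norm_pos_iff.mpr hustar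
  have hlam : ∀ i, 0 < lam i := fun i =>
    pos_of_inner_eq_mul_inner_map γ (heig i) fun h => by simpa [h] using hortho i i
  have hon : Orthonormal ℝ (γ ∘ ui) := orthonormal_iff_ite.mpr hortho
  have hmem : γ ustar ∈ (span ℝ (Set.range (γ ∘ ui))).topologicalClosure := by
    obtain ⟨m, hm, k, hk, rfl⟩ := hdecomp ustar
    rw [map_add, map_eq_zero_of_adjoint_map_eq_zero γ hS hk, add_zero]
    exact γ.map_mem_closure_span_range hm
  have hres : |(lam 0 - lamstar) / lam 0| * ‖γ ustar‖ ≤ ‖γ w‖ :=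
    hon.mul_norm_le_norm_of_inner_eq_mul hmem
      (fun i => inner_map_residual_eq_div_mul γ (hlam i).ne' (heig i) hw) (abs_nonneg _) hclosest
  set s := √(lam 0)
  have hs : 0 < s := Real.sqrt_pos.mpr (hlam 0)
  have hs2 : s ^ 2 = lam 0 := Real.sq_sqrt (hlam 0).le
  have hbound : |(s ^ 2 - lamstar) / s ^ 2| * ‖γ ustar‖ ≤ s⁻¹ * (A + s⁻¹ * B) := by
    rw [hs2, ← hCγ]
    calc _ ≤ ‖γ w‖ := hres
      _ ≤ Cγ * ‖w‖ := hCopt w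
      _ ≤ Cγ * (A + Cγ * B) := mul_le_mul_of_nonneg_left hwbound (hCγ ▸ (inv_pos.mpr hs).le)
  obtain ⟨hX₂pos, hX₂le⟩ := quadratic_pos_root_le hs (sub_pos.mpr ((div_lt_iff₀ hg).mpr hBsmall))
    (sub_div_le_sq_add_mul_of_abs_mul_le hs hg hbound)
  refine ⟨hs2 ▸ pow_le_pow_left₀ hX₂pos.le hX₂le 2, ?_⟩
  rw [hCγ, one_div]
  exact inv_anti₀ hX₂pos hX₂le

/-- Abstract complementarity lower bound on the smallest eigenvalue `λ₁ = lam 0`: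
if `λ₁` is relatively closest to `λ_*`, `B < λ_* ‖γ u_*‖`, and
`‖w‖_V ≤ A + C_γ B` with `C_γ = λ₁^{-1/2}` the optimal constant, then
`X₂² ≤ λ₁` and `C_γ ≤ 1/X₂`, where
`X₂ = (−α + √(α² + 4(λ_* − β)))/2`, `α = A/‖γu_*‖`, `β = B/‖γu_*‖`. -/
theorem abstract_complementarity_estimate
    {V H : Type*} [NormedAddCommGroup V] [InnerProductSpace ℝ V] [CompleteSpace V]
    [NormedAddCommGroup H] [InnerProductSpace ℝ H] [CompleteSpace H]
    (γ : V →L[ℝ] H) (hγ : IsCompactOperator γ)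
    (S : H →L[ℝ] V)
    (hS : ∀ (f : H) (v : V), ⟪S f, v⟫ = ⟪f, γ v⟫)
    (lam : ℕ → ℝ) (ui : ℕ → V)
    (hui : ∀ i, ui i ≠ 0)
    (heig : ∀ i, ∀ v : V, ⟪ui i, v⟫ = lam i * ⟪γ (ui i), γ v⟫)
    (hortho : ∀ i j, ⟪γ (ui i), γ (ui j)⟫ = if i = j then (1 : ℝ) else 0)
    (hdecomp : ∀ u : V, ∃ m ∈ (Submodule.span ℝ (Set.range ui)).topologicalClosure,
      ∃ k : V, S (γ k) = 0 ∧ u = m + k)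
    (hmin : ∀ i, lam 0 ≤ lam i)
    (ustar : V) (lamstar : ℝ) (hustar : γ ustar ≠ 0)
    (w : V)
    (hw : ∀ v : V, ⟪w, v⟫ = ⟪ustar, v⟫ - lamstar * ⟪γ ustar, γ v⟫)
    (hclosest : ∀ i, |(lam 0 - lamstar) / lam 0| ≤ |(lam i - lamstar) / lam i|)
    (Cγ : ℝ) (hCγ : Cγ = (Real.sqrt (lam 0))⁻¹)
    (hCopt : ∀ v : V, ‖γ v‖ ≤ Cγ * ‖v‖)
    (A B : ℝ) (hA : 0 ≤ A) (hB : 0 ≤ B)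
    (hBsmall : B < lamstar * ‖γ ustar‖)
    (hwbound : ‖w‖ ≤ A + Cγ * B) :
    ((-(A / ‖γ ustar‖) +
        Real.sqrt ((A / ‖γ ustar‖) ^ 2 + 4 * (lamstar - B / ‖γ ustar‖))) / 2) ^ 2
      ≤ lam 0 ∧
    Cγ ≤ 1 / ((-(A / ‖γ ustar‖) +
        Real.sqrt ((A / ‖γ ustar‖) ^ 2 + 4 * (lamstar - B / ‖γ ustar‖))) / 2) :=
  abstract_complementarity_estimate_general γ S hS lam ui heig hortho hdecomp ustar lamstar hustar w
    hw hclosest Cγ hCγ hCopt A B hBsmall hwbound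
end

section
/- If λ₁^low ≤ λ₁ ≤ λ_* ≤ λ₂^low ≤ λ₂ ≤ λ₂^up and D₁ = (λ_* − λ₁^low)/λ₁^low ≤ D₂ = (λ₂^low − λ_*)/λ₂^up, then |(λ₁ − λ_*)/λ₁| ≤ |(λ_i − λ_*)/λ_i| for all i ≥ 1, where λ₁ ≤ λ₂ ≤ λ₃ ≤ ⋯ are positive reals. -/
/-! On `x > 0` the signed relative error `(x - c) / x = 1 - c / x` is nondecreasing in `x` when
`c ≥ 0`. Hence the error of `λ₁` is at most `D₁`, the bound `D₂` is at most the error of `λ₂`,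
and the error of `λ₂` is at most that of every `λᵢ` with `i ≥ 2`. -/

section RelativeError

variable {α : Type*} [Field α] [LinearOrder α] [IsStrictOrderedRing α] {c x y : α}

theorem sub_div_self_le_sub_div_self (hc : 0 ≤ c) (hx : 0 < x) (hxy : x ≤ y) :
    (x - c) / x ≤ (y - c) / y := by
  rw [sub_div, sub_div, div_self hx.ne', div_self (hx.trans_le hxy).ne']
  gcongr

theorem rsub_div_self_le_rsub_div_self (hc : 0 ≤ c) (hx : 0 < x) (hxy : x ≤ y) :
    (c - y) / y ≤ (c - x) / x := by
  simpa only [← neg_div, neg_sub] using neg_le_neg (sub_div_self_le_sub_div_self hc hx hxy)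

end RelativeError

theorem relatively_closest_test_general
    (lam : ℕ → ℝ) (hmono : Monotone lam) (hpos : ∀ i, 0 < lam i)
    (lam1low lam2low lam2up lamstar : ℝ)
    (h1lowpos : 0 < lam1low)
    (h1 : lam1low ≤ lam 0) (h2 : lam 0 ≤ lamstar) (h3 : lamstar ≤ lam2low)
    (h4 : lam2low ≤ lam 1) (h5 : lam 1 ≤ lam2up)
    (hD : (lamstar - lam1low) / lam1low ≤ (lam2low - lamstar) / lam2up) :
    ∀ i : ℕ, |(lam 0 - lamstar) / lam 0| ≤ |(lam i - lamstar) / lam i| := by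
  intro i
  rcases i.eq_zero_or_pos with rfl | hi
  · exact le_rfl
  have hstar : 0 ≤ lamstar := (hpos 0).le.trans h2
  have hlam1 : (lamstar - lam 0) / lam 0 ≤ (lamstar - lam1low) / lam1low :=
    rsub_div_self_le_rsub_div_self hstar h1lowpos h1
  have hlam2 : (lam2low - lamstar) / lam2up ≤ (lam 1 - lamstar) / lam 1 :=
    div_le_div₀ (sub_nonneg.2 (h3.trans h4)) (sub_le_sub_right h4 _) (hpos 1) h5
  have hlami : (lam 1 - lamstar) / lam 1 ≤ (lam i - lamstar) / lam i :=
    sub_div_self_le_sub_div_self hstar (hpos 1) (hmono hi)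
  have hstar_le : lamstar ≤ lam i := (h3.trans h4).trans (hmono hi)
  rw [abs_of_nonpos (div_nonpos_of_nonpos_of_nonneg (sub_nonpos.2 h2) (hpos 0).le),
    abs_of_nonneg (div_nonneg (sub_nonneg.2 hstar_le) (hpos i).le), ← neg_div, neg_sub]
  exact ((hlam1.trans hD).trans hlam2).trans hlami

/-- If `λ₁^low ≤ λ₁ ≤ λ_* ≤ λ₂^low ≤ λ₂ ≤ λ₂^up` and
`D₁ = (λ_* − λ₁^low)/λ₁^low ≤ D₂ = (λ₂^low − λ_*)/λ₂^up`, then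
`|(λ₁ − λ_*)/λ₁| ≤ |(λᵢ − λ_*)/λᵢ|` for all `i`, where `λ₁ ≤ λ₂ ≤ λ₃ ≤ ⋯`
is a nondecreasing sequence of positive reals (`λ₁ = lam 0`, `λ₂ = lam 1`). -/
theorem relatively_closest_test
    (lam : ℕ → ℝ) (hmono : Monotone lam) (hpos : ∀ i, 0 < lam i)
    (lam1low lam2low lam2up lamstar : ℝ)
    (h1lowpos : 0 < lam1low) (h2lowpos : 0 < lam2low) (h2uppos : 0 < lam2up)
    (hstarpos : 0 < lamstar)
    (h1 : lam1low ≤ lam 0) (h2 : lam 0 ≤ lamstar) (h3 : lamstar ≤ lam2low)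
    (h4 : lam2low ≤ lam 1) (h5 : lam 1 ≤ lam2up)
    (hD : (lamstar - lam1low) / lam1low ≤ (lam2low - lamstar) / lam2up) :
    ∀ i : ℕ, |(lam 0 - lamstar) / lam 0| ≤ |(lam i - lamstar) / lam i| :=
  relatively_closest_test_general lam hmono hpos lam1low lam2low lam2up lamstar h1lowpos h1 h2 h3 h4
    h5 hD
end
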